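/- Let G : ℍ^{N×S} → ℍ^{M×P} be ℝ-differentiable at Q ∈ ℍ^{N×S}, let F : ℍ^{M×P} → ℍ^{R×T} be ℝ-differentiable at G(Q), set H(Q) := F(G(Q)), and let μ ∈ ℍ, μ ≠ 0. Then D_{Q^{μ*}}H(Q) = Σ_{ν∈{1,i,j,k}} (D_{X^{ν*}}F)(G(Q)) · (D_{Q^{μ*}}G^{ν*})(Q), where G^{ν*} denotes the function Q ↦ ((G(Q))^ν)* (entrywise involution x^ν = νxν⁻¹ followed by entrywise conjugation) and (D_{X^{ν*}}F)(G(Q)) is the GHR Jacobian of F with respect to the conjugated ν-rotation of its matrix argument, evaluated at G(Q). -/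

import Mathlib

open scoped Quaternion

noncomputable section

/-- The imaginary unit `i` of the quaternions. -/
def qI : ℍ[ℝ] := ⟨0, 1, 0, 0⟩
/-- The imaginary unit `j` of the quaternions. -/
def qJ : ℍ[ℝ] := ⟨0, 0, 1, 0⟩
/-- The imaginary unit `k` of the quaternions. -/
def qK : ℍ[ℝ] := ⟨0, 0, 0, 1⟩

/-- The `N × S` quaternion matrix with entry `d` at position `(n,s)` and `0` elsewhere. -/
def single {N S : ℕ} (n : Fin N) (s : Fin S) (d : ℍ[ℝ]) : Fin N → Fin S → ℍ[ℝ] :=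
  Pi.single n (Pi.single s d)

/-- Real directional (Fréchet) derivative of a scalar function of a matrix variable, in the
direction `d` at the single entry `(n,s)` (the other entries held fixed). -/
def pd {N S : ℕ} (f : (Fin N → Fin S → ℍ[ℝ]) → ℍ[ℝ]) (Q : Fin N → Fin S → ℍ[ℝ])
    (n : Fin N) (s : Fin S) (d : ℍ[ℝ]) : ℍ[ℝ] :=
  fderiv ℝ f Q (single n s d)

/-- Left GHR derivative `∂f/∂q_{ns}^{μ*}` of a scalar function `f` with respect to the entry
`q_{ns}` of its matrix argument:
`¼(∂f/∂q_a + (∂f/∂q_b) i^μ + (∂f/∂q_c) j^μ + (∂f/∂q_d) k^μ)`, with `x^μ = μ x μ⁻¹`. -/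
def ghrEStar {N S : ℕ} (μ : ℍ[ℝ]) (f : (Fin N → Fin S → ℍ[ℝ]) → ℍ[ℝ])
    (Q : Fin N → Fin S → ℍ[ℝ]) (n : Fin N) (s : Fin S) : ℍ[ℝ] :=
  (1 / 4 : ℝ) • (pd f Q n s 1 + pd f Q n s qI * (μ * qI * μ⁻¹)
    + pd f Q n s qJ * (μ * qJ * μ⁻¹) + pd f Q n s qK * (μ * qK * μ⁻¹))

/-- The conjugate GHR Jacobian `D_{Q^{μ*}}F(Q)`: the `MP × NS` quaternion matrix whose
`((m,p),(n,s))` entry is `∂F_{mp}/∂q_{ns}^{μ*}`. -/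
def ghrJacStar {N S M P : ℕ} (μ : ℍ[ℝ])
    (F : (Fin N → Fin S → ℍ[ℝ]) → (Fin M → Fin P → ℍ[ℝ]))
    (Q : Fin N → Fin S → ℍ[ℝ]) : Matrix (Fin M × Fin P) (Fin N × Fin S) ℍ[ℝ] :=
  Matrix.of fun mp ns => ghrEStar μ (fun X => F X mp.1 mp.2) Q ns.1 ns.2

/-- Entrywise conjugated quaternion rotation `x ↦ (ν x ν⁻¹)*` of a matrix. -/
def rotStarM {M P : ℕ} (ν : ℍ[ℝ]) (A : Fin M → Fin P → ℍ[ℝ]) : Fin M → Fin P → ℍ[ℝ] :=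
  fun m p => star (ν * A m p * ν⁻¹)

/-!
Everything is computed from real differentials. By the ordinary chain rule, the differential of
`H_{rt}` in the direction `d` at the entry `(n,s)` is `Σ_{mp} ℓ_{mp}(δ_{mp})`, where `ℓ_{mp}` is the
partial differential of `F_{rt}` at the entry `(m,p)` and `δ = DG(Q)(single n s d)`. Every
real-linear `ℓ : ℍ → ℍ` satisfies `ℓ h = Σ_ν (∂ℓ/∂q^{ν*}) (ν h ν⁻¹)*` over `ν ∈ {1, i, j, k}`, which
turns `ℓ_{mp}(δ_{mp})` into `Σ_ν (D_{X^{ν*}}F)_{rt,mp} · d(G^{ν*})_{mp}`. Since `∂/∂q^{μ*}` is left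
`ℍ`-linear in the differential, applying it yields the matrix products.
-/

/-- `ghrStarCoeff μ ℓ` is the conjugate GHR derivative `∂/∂q^{μ*}` of a function whose real
differential at the point is `ℓ`. -/
def ghrStarCoeff (μ : ℍ[ℝ]) (ℓ : ℍ[ℝ] → ℍ[ℝ]) : ℍ[ℝ] :=
  (1 / 4 : ℝ) • (ℓ 1 + ℓ qI * (μ * qI * μ⁻¹) + ℓ qJ * (μ * qJ * μ⁻¹) + ℓ qK * (μ * qK * μ⁻¹))

theorem ghrEStar_eq_ghrStarCoeff {N S : ℕ} (μ : ℍ[ℝ]) (f : (Fin N → Fin S → ℍ[ℝ]) → ℍ[ℝ])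
    (Q : Fin N → Fin S → ℍ[ℝ]) (n : Fin N) (s : Fin S) :
    ghrEStar μ f Q n s = ghrStarCoeff μ (pd f Q n s) :=
  rfl

theorem ghrStarCoeff_add (μ : ℍ[ℝ]) (ℓ₁ ℓ₂ : ℍ[ℝ] → ℍ[ℝ]) :
    ghrStarCoeff μ (fun d => ℓ₁ d + ℓ₂ d) = ghrStarCoeff μ ℓ₁ + ghrStarCoeff μ ℓ₂ := by
  rw [ghrStarCoeff, ghrStarCoeff, ghrStarCoeff, ← smul_add]
  congr 1
  simp only [add_mul]
  abel

theorem ghrStarCoeff_mul_left (μ c : ℍ[ℝ]) (ℓ : ℍ[ℝ] → ℍ[ℝ]) :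
    ghrStarCoeff μ (fun d => c * ℓ d) = c * ghrStarCoeff μ ℓ := by
  simp only [ghrStarCoeff, mul_smul_comm, mul_add, mul_assoc]

theorem ghrStarCoeff_sum {ι : Type*} (μ : ℍ[ℝ]) (s : Finset ι) (ℓ : ι → ℍ[ℝ] → ℍ[ℝ]) :
    ghrStarCoeff μ (fun d => ∑ i ∈ s, ℓ i d) = ∑ i ∈ s, ghrStarCoeff μ (ℓ i) := by
  simp only [ghrStarCoeff, Finset.sum_mul, ← Finset.sum_add_distrib, Finset.smul_sum]

section Quaternion

open Quaternion

theorem qI_inv : qI⁻¹ = -qI := by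
  refine inv_eq_of_mul_eq_one_left ?_
  ext <;> simp [re_mul, imI_mul, imJ_mul, imK_mul] <;> simp [qI]

theorem qJ_inv : qJ⁻¹ = -qJ := by
  refine inv_eq_of_mul_eq_one_left ?_
  ext <;> simp [re_mul, imI_mul, imJ_mul, imK_mul] <;> simp [qJ]

theorem qK_inv : qK⁻¹ = -qK := by
  refine inv_eq_of_mul_eq_one_left ?_
  ext <;> simp [re_mul, imI_mul, imJ_mul, imK_mul] <;> simp [qK]

theorem eq_re_smul_one_add_im_smul_qIJK (h : ℍ[ℝ]) :
    h = h.re • 1 + h.imI • qI + h.imJ • qJ + h.imK • qK := by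
  ext <;> simp <;> simp [qI, qJ, qK]

/-- For `e, ν ∈ {1, i, j, k}` write `ν e ν⁻¹ = χ_e(ν) e`; then `(ν h ν⁻¹)* = Σ_f χ_f(ν) h_f f*`,
and the `χ_e` are the four characters of `{1, i, j, k} ≅ Q₈/{±1}`. Their orthogonality collapses
the sum over `ν` to `Σ_e h_e ℓ e = ℓ h`. -/
theorem LinearMap.eq_sum_ghrStarCoeff_mul_star_conj (ℓ : ℍ[ℝ] →ₗ[ℝ] ℍ[ℝ]) (h : ℍ[ℝ]) :
    ℓ h = ghrStarCoeff 1 ℓ * star (1 * h * 1⁻¹) + ghrStarCoeff qI ℓ * star (qI * h * qI⁻¹)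
      + ghrStarCoeff qJ ℓ * star (qJ * h * qJ⁻¹) + ghrStarCoeff qK ℓ * star (qK * h * qK⁻¹) := by
  conv_lhs => rw [eq_re_smul_one_add_im_smul_qIJK h]
  simp only [map_add, map_smul, ghrStarCoeff, qI_inv, qJ_inv, qK_inv, inv_one, mul_one]
  generalize ℓ 1 = a, ℓ qI = b, ℓ qJ = c, ℓ qK = d
  ext <;>
    simp only [re_mul, imI_mul, imJ_mul, imK_mul, re_add, imI_add, imJ_add, imK_add, re_smul,
      imI_smul, imJ_smul, imK_smul, re_neg, imI_neg, imJ_neg, imK_neg, re_star, imI_star,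
      imJ_star, imK_star, re_one, imI_one, imJ_one, imK_one, smul_eq_mul] <;>
    simp only [qI, qJ, qK] <;> ring

end Quaternion

def conjStarL (ν : ℍ[ℝ]) : ℍ[ℝ] →L[ℝ] ℍ[ℝ] :=
  LinearMap.toContinuousLinearMap
    { toFun := fun x => star (ν * x * ν⁻¹)
      map_add' := fun x y => by simp only [mul_add, add_mul, star_add]
      map_smul' := fun r x => by simp [Algebra.mul_smul_comm, Algebra.smul_mul_assoc] }

theorem conjStarL_apply (ν x : ℍ[ℝ]) : conjStarL ν x = star (ν * x * ν⁻¹) := rfl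

def pdₗ {N S : ℕ} (f : (Fin N → Fin S → ℍ[ℝ]) → ℍ[ℝ]) (Q : Fin N → Fin S → ℍ[ℝ])
    (n : Fin N) (s : Fin S) : ℍ[ℝ] →ₗ[ℝ] ℍ[ℝ] :=
  (fderiv ℝ f Q).toLinearMap ∘ₗ
    (LinearMap.single ℝ (fun _ => Fin S → ℍ[ℝ]) n ∘ₗ LinearMap.single ℝ (fun _ => ℍ[ℝ]) s)

theorem coe_pdₗ {N S : ℕ} (f : (Fin N → Fin S → ℍ[ℝ]) → ℍ[ℝ]) (Q : Fin N → Fin S → ℍ[ℝ])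
    (n : Fin N) (s : Fin S) : ⇑(pdₗ f Q n s) = pd f Q n s := rfl

theorem sum_single {M P : ℕ} (A : Fin M → Fin P → ℍ[ℝ]) :
    ∑ m, ∑ p, single m p (A m p) = A := by
  funext m p
  simp [single, Finset.sum_apply, Pi.single_apply, ite_apply]

theorem fderiv_apply_eq_sum_pd {M P : ℕ} (f : (Fin M → Fin P → ℍ[ℝ]) → ℍ[ℝ])
    (Y A : Fin M → Fin P → ℍ[ℝ]) :
    fderiv ℝ f Y A = ∑ m, ∑ p, pd f Y m p (A m p) := by
  conv_lhs => rw [← sum_single A]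
  simp only [map_sum, pd]

theorem fderiv_apply_apply {E F : Type*} [NormedAddCommGroup E] [NormedSpace ℝ E]
    [NormedAddCommGroup F] [NormedSpace ℝ F] {ι κ : Type*} [Fintype ι] [Fintype κ]
    {Φ : E → ι → κ → F} {x : E} (hΦ : DifferentiableAt ℝ Φ x) (i : ι) (k : κ) (v : E) :
    fderiv ℝ (fun x => Φ x i k) x v = fderiv ℝ Φ x v i k := by
  rw [fderiv_apply (differentiableAt_pi.1 hΦ i) k, fderiv_apply hΦ i]
  rfl

theorem pd_comp {N S : ℕ} {E : Type*} [NormedAddCommGroup E] [NormedSpace ℝ E]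
    {f : E → ℍ[ℝ]} {G : (Fin N → Fin S → ℍ[ℝ]) → E} {Q : Fin N → Fin S → ℍ[ℝ]}
    (hf : DifferentiableAt ℝ f (G Q)) (hG : DifferentiableAt ℝ G Q) (n : Fin N) (s : Fin S)
    (d : ℍ[ℝ]) :
    pd (fun X => f (G X)) Q n s d = fderiv ℝ f (G Q) (fderiv ℝ G Q (single n s d)) := by
  rw [pd, fderiv_fun_comp Q hf hG]
  rfl

section ChainRule

variable {N S M P : ℕ} {G : (Fin N → Fin S → ℍ[ℝ]) → (Fin M → Fin P → ℍ[ℝ])}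
  {Q : Fin N → Fin S → ℍ[ℝ]}

theorem pd_rotStarM (hG : DifferentiableAt ℝ G Q) (ν : ℍ[ℝ]) (m : Fin M) (p : Fin P)
    (n : Fin N) (s : Fin S) (d : ℍ[ℝ]) :
    pd (fun X => rotStarM ν (G X) m p) Q n s d
      = star (ν * fderiv ℝ G Q (single n s d) m p * ν⁻¹) := by
  have hGmp : DifferentiableAt ℝ (fun X => G X m p) Q :=
    differentiableAt_pi.1 (differentiableAt_pi.1 hG m) p
  change pd (fun X => conjStarL ν (G X m p)) Q n s d = _
  rw [pd_comp (conjStarL ν).differentiableAt hGmp, (conjStarL ν).fderiv, conjStarL_apply,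
    fderiv_apply_apply hG]

theorem pd_comp_apply_eq_sum {R T : ℕ} {F : (Fin M → Fin P → ℍ[ℝ]) → (Fin R → Fin T → ℍ[ℝ])}
    (hG : DifferentiableAt ℝ G Q) (hF : DifferentiableAt ℝ F (G Q))
    (r : Fin R) (t : Fin T) (n : Fin N) (s : Fin S) (d : ℍ[ℝ]) :
    pd (fun X => F (G X) r t) Q n s d = ∑ m, ∑ p,
      (ghrEStar 1 (fun Y => F Y r t) (G Q) m p * pd (fun X => rotStarM 1 (G X) m p) Q n s d
        + ghrEStar qI (fun Y => F Y r t) (G Q) m p * pd (fun X => rotStarM qI (G X) m p) Q n s d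
        + ghrEStar qJ (fun Y => F Y r t) (G Q) m p * pd (fun X => rotStarM qJ (G X) m p) Q n s d
        + ghrEStar qK (fun Y => F Y r t) (G Q) m p
          * pd (fun X => rotStarM qK (G X) m p) Q n s d) := by
  have hFrt : DifferentiableAt ℝ (fun Y => F Y r t) (G Q) :=
    differentiableAt_pi.1 (differentiableAt_pi.1 hF r) t
  rw [pd_comp hFrt hG, fderiv_apply_eq_sum_pd]
  simp only [pd_rotStarM hG, ghrEStar_eq_ghrStarCoeff, ← coe_pdₗ]
  exact Finset.sum_congr rfl fun m _ => Finset.sum_congr rfl fun p _ =>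
    LinearMap.eq_sum_ghrStarCoeff_mul_star_conj _ _

end ChainRule

theorem ghr_star_chain_rule_general {N S M P R T : ℕ} (μ : ℍ[ℝ])
    (G : (Fin N → Fin S → ℍ[ℝ]) → (Fin M → Fin P → ℍ[ℝ]))
    (F : (Fin M → Fin P → ℍ[ℝ]) → (Fin R → Fin T → ℍ[ℝ]))
    (Q : Fin N → Fin S → ℍ[ℝ])
    (hG : DifferentiableAt ℝ G Q) (hF : DifferentiableAt ℝ F (G Q)) :
    ghrJacStar μ (fun X => F (G X)) Q =
      ghrJacStar (1 : ℍ[ℝ]) F (G Q) * ghrJacStar μ (fun X => rotStarM (1 : ℍ[ℝ]) (G X)) Q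
        + ghrJacStar qI F (G Q) * ghrJacStar μ (fun X => rotStarM qI (G X)) Q
        + ghrJacStar qJ F (G Q) * ghrJacStar μ (fun X => rotStarM qJ (G X)) Q
        + ghrJacStar qK F (G Q) * ghrJacStar μ (fun X => rotStarM qK (G X)) Q := by
  refine Matrix.ext fun ⟨r, t⟩ ⟨n, s⟩ => ?_
  simp only [ghrJacStar, Matrix.of_apply, Matrix.add_apply, Matrix.mul_apply,
    Fintype.sum_prod_type, ← Finset.sum_add_distrib]
  rw [ghrEStar_eq_ghrStarCoeff, funext (pd_comp_apply_eq_sum hG hF r t n s)]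
  simp only [ghrStarCoeff_sum, ghrStarCoeff_add, ghrStarCoeff_mul_left,
    ← ghrEStar_eq_ghrStarCoeff]

/-- **Conjugate GHR chain rule** (Theorem 2, conjugate identity):
`D_{Q^{μ*}}(F ∘ G)(Q) = Σ_{ν∈{1,i,j,k}} (D_{X^{ν*}}F)(G(Q)) · (D_{Q^{μ*}}G^{ν*})(Q)`. -/
theorem ghr_star_chain_rule {N S M P R T : ℕ} (μ : ℍ[ℝ]) (hμ : μ ≠ 0)
    (G : (Fin N → Fin S → ℍ[ℝ]) → (Fin M → Fin P → ℍ[ℝ]))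
    (F : (Fin M → Fin P → ℍ[ℝ]) → (Fin R → Fin T → ℍ[ℝ]))
    (Q : Fin N → Fin S → ℍ[ℝ])
    (hG : DifferentiableAt ℝ G Q) (hF : DifferentiableAt ℝ F (G Q)) :
    ghrJacStar μ (fun X => F (G X)) Q =
      ghrJacStar (1 : ℍ[ℝ]) F (G Q) * ghrJacStar μ (fun X => rotStarM (1 : ℍ[ℝ]) (G X)) Q
        + ghrJacStar qI F (G Q) * ghrJacStar μ (fun X => rotStarM qI (G X)) Q
        + ghrJacStar qJ F (G Q) * ghrJacStar μ (fun X => rotStarM qJ (G X)) Q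
        + ghrJacStar qK F (G Q) * ghrJacStar μ (fun X => rotStarM qK (G X)) Q :=
  ghr_star_chain_rule_general μ G F Q hG hF
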